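/- arXiv:2501.11173 — 2 statements merged into one kernel-verified Lean document; each statement's English description precedes it below -/
import Mathlib

section
/- Let B = {a₁, ..., a₈} be affinely independent in (Z/2Z)^n and let x₁ = a₁+a₂+a₃+a₄+a₅, x₂ = a₁+a₂+a₃+a₇+a₈, x₃ = a₃+a₄+a₅+a₆+a₇, x₄ = a₂+a₄+a₆+a₇+a₈. Then C = B ∪ {x₁, x₂, x₃, x₄} is a cap of size 12. -/
/-- A cap: a subset of (Z/2Z)^n containing no quad (four distinct vectors summing to zero). -/
def IsCap {n : ℕ} (C : Set (Fin n → ZMod 2)) : Prop :=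
  ∀ a ∈ C, ∀ b ∈ C, ∀ c ∈ C, ∀ d ∈ C,
    a ≠ b → a ≠ c → a ≠ d → b ≠ c → b ≠ d → c ≠ d → a + b + c + d ≠ 0

/-- Affine independence: no element is the sum of an odd number of other elements. -/
def AffIndep {n : ℕ} (B : Finset (Fin n → ZMod 2)) : Prop :=
  ∀ b ∈ B, ∀ T ⊆ B.erase b, Odd T.card → b ≠ ∑ v ∈ T, v

/-!
Every point of `C` is an odd-weight `0/1`-combination of `a₁, …, a₈`, and affine independence of
`B` says precisely that no nonzero even-weight combination of the `aᵢ` vanishes. A sum of two or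
of four points of `C` is an even-weight combination, so distinctness and quad-freeness of `C` are
inherited from the twelve coefficient vectors in `(Z/2Z)⁸`, where they are a finite check.
-/

open Finset

namespace AffIndep

variable {n : ℕ}

theorem sum_ne_zero {B T : Finset (Fin n → ZMod 2)} (hB : AffIndep B) (hTB : T ⊆ B)
    (hT : T.Nonempty) (heven : Even T.card) : ∑ v ∈ T, v ≠ 0 := by
  obtain ⟨b, hb⟩ := hT
  intro hzero
  have hodd : Odd (T.erase b).card := by
    rw [card_erase_of_mem hb]
    exact Nat.Even.sub_odd (card_pos.mpr ⟨b, hb⟩) heven odd_one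
  refine hB b (hTB hb) (T.erase b) (erase_subset_erase b hTB) hodd ?_
  rw [← add_sum_erase T (fun v => v) hb] at hzero
  simpa [ZModModule.neg_eq_self] using eq_neg_of_add_eq_zero_left hzero

theorem linearCombination_ne_zero {ι : Type*} [Fintype ι] {a : ι → Fin n → ZMod 2}
    (ha : Function.Injective a) (hB : AffIndep (univ.image a)) {c : ι → ZMod 2} (hc : c ≠ 0)
    (hsum : ∑ i, c i = 0) : Fintype.linearCombination (ZMod 2) a c ≠ 0 := by
  have hbin : ∀ x : ZMod 2, x = 0 ∨ x = 1 := by decide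
  set S := univ.filter fun i => c i ≠ 0
  have hcomb : Fintype.linearCombination (ZMod 2) a c = ∑ v ∈ S.image a, v := by
    rw [Fintype.linearCombination_apply, sum_image ha.injOn, sum_filter]
    exact sum_congr rfl fun i _ => by rcases hbin (c i) with h | h <;> simp [h]
  have heven : Even S.card := by
    rw [← ZMod.natCast_eq_zero_iff_even, ← hsum, ← sum_boole]
    exact sum_congr rfl fun i _ => by rcases hbin (c i) with h | h <;> simp [h]
  obtain ⟨i, hi⟩ := Function.ne_iff.mp hc
  rw [hcomb]
  refine hB.sum_ne_zero (image_subset_image (subset_univ S)) ⟨a i, mem_image_of_mem a ?_⟩ ?_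
  · simpa [S] using hi
  · rwa [card_image_of_injective S ha]

end AffIndep

section Transfer

variable {m n : ℕ} {S : Set (Fin m → ZMod 2)} {f : (Fin m → ZMod 2) →ₗ[ZMod 2] Fin n → ZMod 2}

theorem injOn_of_ne_zero_of_sum_eq_zero (hodd : ∀ c ∈ S, ∑ i, c i = 1)
    (hf : ∀ c ≠ 0, ∑ i, c i = 0 → f c ≠ 0) : Set.InjOn f S := by
  intro c hc d hd hcd
  by_contra hne
  refine hf (c - d) (sub_ne_zero.mpr hne) ?_ (by rw [map_sub, hcd, sub_self])
  simp [sum_sub_distrib, hodd c hc, hodd d hd]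

theorem IsCap.image_of_ne_zero_of_sum_eq_zero (hS : IsCap S) (hodd : ∀ c ∈ S, ∑ i, c i = 1)
    (hf : ∀ c ≠ 0, ∑ i, c i = 0 → f c ≠ 0) : IsCap (f '' S) := by
  rintro _ ⟨c₁, h₁, rfl⟩ _ ⟨c₂, h₂, rfl⟩ _ ⟨c₃, h₃, rfl⟩ _ ⟨c₄, h₄, rfl⟩ h₁₂ h₁₃ h₁₄ h₂₃ h₂₄ h₃₄
  rw [← map_add, ← map_add, ← map_add]
  refine hf _ (hS c₁ h₁ c₂ h₂ c₃ h₃ c₄ h₄ (ne_of_apply_ne f h₁₂) (ne_of_apply_ne f h₁₃)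
    (ne_of_apply_ne f h₁₄) (ne_of_apply_ne f h₂₃) (ne_of_apply_ne f h₂₄) (ne_of_apply_ne f h₃₄)) ?_
  simp only [Pi.add_apply, sum_add_distrib, hodd _ h₁, hodd _ h₂, hodd _ h₃, hodd _ h₄]
  decide

end Transfer

/-- Row `i` lists the coefficients of the `i`-th point of `C` with respect to `a 0, …, a 7`. -/
def capCoeffs : Fin 12 → Fin 8 → ZMod 2 :=
  ![![1, 0, 0, 0, 0, 0, 0, 0], ![0, 1, 0, 0, 0, 0, 0, 0], ![0, 0, 1, 0, 0, 0, 0, 0],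
    ![0, 0, 0, 1, 0, 0, 0, 0], ![0, 0, 0, 0, 1, 0, 0, 0], ![0, 0, 0, 0, 0, 1, 0, 0],
    ![0, 0, 0, 0, 0, 0, 1, 0], ![0, 0, 0, 0, 0, 0, 0, 1],
    ![1, 1, 1, 1, 1, 0, 0, 0], ![1, 1, 1, 0, 0, 0, 1, 1],
    ![0, 0, 1, 1, 1, 1, 1, 0], ![0, 1, 0, 1, 0, 1, 1, 1]]

theorem sum_capCoeffs : ∀ i, ∑ t, capCoeffs i t = 1 := by decide

theorem capCoeffs_injective : Function.Injective capCoeffs := by decide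

theorem capCoeffs_add_add_add_ne_zero : ∀ i j k l : Fin 12, i ≠ j → i ≠ k → i ≠ l → j ≠ k →
    j ≠ l → k ≠ l → capCoeffs i + capCoeffs j + capCoeffs k + capCoeffs l ≠ 0 := by
  decide +kernel

theorem isCap_range_capCoeffs : IsCap (Set.range capCoeffs) := by
  rintro _ ⟨i, rfl⟩ _ ⟨j, rfl⟩ _ ⟨k, rfl⟩ _ ⟨l, rfl⟩ hij hik hil hjk hjl hkl
  exact capCoeffs_add_add_add_ne_zero i j k l (ne_of_apply_ne _ hij) (ne_of_apply_ne _ hik)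
    (ne_of_apply_ne _ hil) (ne_of_apply_ne _ hjk) (ne_of_apply_ne _ hjl) (ne_of_apply_ne _ hkl)

theorem cap12_233332 {n : ℕ} (a : Fin 8 → (Fin n → ZMod 2))
    (ha : Function.Injective a)
    (hB : AffIndep (Finset.image a Finset.univ)) :
    IsCap (↑(Finset.image a Finset.univ ∪
        {a 0 + a 1 + a 2 + a 3 + a 4,
         a 0 + a 1 + a 2 + a 6 + a 7,
         a 2 + a 3 + a 4 + a 5 + a 6,
         a 1 + a 3 + a 5 + a 6 + a 7}) : Set (Fin n → ZMod 2)) ∧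
    (Finset.image a Finset.univ ∪
        {a 0 + a 1 + a 2 + a 3 + a 4,
         a 0 + a 1 + a 2 + a 6 + a 7,
         a 2 + a 3 + a 4 + a 5 + a 6,
         a 1 + a 3 + a 5 + a 6 + a 7}).card = 12 := by
  have hC : Finset.image a Finset.univ ∪
      {a 0 + a 1 + a 2 + a 3 + a 4, a 0 + a 1 + a 2 + a 6 + a 7,
       a 2 + a 3 + a 4 + a 5 + a 6, a 1 + a 3 + a 5 + a 6 + a 7} =
      univ.image (Fintype.linearCombination (ZMod 2) a ∘ capCoeffs) := by
    ext v
    simp only [Fin.isValue, union_insert, union_singleton, mem_insert, mem_image, mem_univ,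
      eq_comm, true_and, Fin.exists_fin_succ, Fin.succ_zero_eq_one, Fin.succ_one_eq_two,
      Fin.reduceSucc, IsEmpty.exists_iff, or_false, capCoeffs, Function.comp_apply,
      Fintype.linearCombination_apply, Matrix.cons_val', Matrix.cons_val_fin_one,
      Fin.sum_univ_eight, Matrix.cons_val_zero, Matrix.cons_val_one, Matrix.cons_val, one_smul,
      zero_smul, add_zero, Matrix.cons_val_succ, zero_add, exists_const]
    tauto
  have hf : ∀ c ≠ 0, ∑ i, c i = 0 → Fintype.linearCombination (ZMod 2) a c ≠ 0 :=
    fun c hc hsum => hB.linearCombination_ne_zero ha hc hsum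
  have hodd : ∀ c ∈ Set.range capCoeffs, ∑ i, c i = 1 := by
    rintro _ ⟨i, rfl⟩
    exact sum_capCoeffs i
  rw [hC, coe_image, coe_univ, Set.image_univ, Set.range_comp]
  refine ⟨isCap_range_capCoeffs.image_of_ne_zero_of_sum_eq_zero hodd hf, ?_⟩
  rw [card_image_of_injOn, card_univ, Fintype.card_fin]
  exact (injOn_of_ne_zero_of_sum_eq_zero hodd hf).comp capCoeffs_injective.injOn
    fun i _ => Set.mem_range_self i
end

section
/- (Forbidden quadruples) Let C be a cap in (Z/2Z)^n with affinely independent subset B of size 8 and dependent set {x₁, x₂, x₃, x₄} with x_i = Σ B_i and |B_i| = 5 for each i. Then it is impossible that |B_i ∩ B_j| = 3 for all six pairs {i,j}. -/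
/-!
By inclusion–exclusion, `|B_i ∆ B_j ∆ B_k| = 4 |B_i ∩ B_j ∩ B_k| - 3`. This set lies in `B`, so
the triple intersection has size 1 or 2; size 1 would make `x_i + x_j + x_k` an element of `B`,
closing a quad. Hence all triple intersections have size 2, and then
`|B₁ ∆ B₂ ∆ B₃ ∆ B₄| = 16 - 8 q` with `q = |B₁ ∩ B₂ ∩ B₃ ∩ B₄|`. This symmetric difference avoids the
fourfold intersection, so it has at most `8 - q` elements, forcing `q = 2` and an empty symmetric
difference: `x₁ + x₂ + x₃ + x₄ = 0`, again a quad.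
-/

open Finset
open scoped symmDiff

namespace Finset

variable {α : Type*} [DecidableEq α]

theorem sum_symmDiff_add_two_nsmul_sum_inter {M : Type*} [AddCommMonoid M] (s t : Finset α)
    (f : α → M) : ∑ x ∈ s ∆ t, f x + 2 • ∑ x ∈ s ∩ t, f x = ∑ x ∈ s, f x + ∑ x ∈ t, f x := by
  rw [← sum_union_inter, two_nsmul, ← add_assoc, symmDiff_eq_sup_sdiff_inf]
  congr 1
  exact sum_sdiff (inter_subset_union : s ∩ t ⊆ s ∪ t)

theorem card_symmDiff_add_two_mul_card_inter (s t : Finset α) :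
    #(s ∆ t) + 2 * #(s ∩ t) = #s + #t := by
  simpa only [sum_const, smul_eq_mul, mul_one] using
    sum_symmDiff_add_two_nsmul_sum_inter s t fun _ ↦ (1 : ℕ)

theorem symmDiff_inter (s t u : Finset α) : s ∆ t ∩ u = (s ∩ u) ∆ (t ∩ u) :=
  inf_symmDiff_distrib_right s t u

theorem card_symmDiff_symmDiff (s t u : Finset α) :
    #(s ∆ t ∆ u) + 2 * (#(s ∩ t) + #(s ∩ u) + #(t ∩ u)) = #s + #t + #u + 4 * #(s ∩ t ∩ u) := by
  have hst := card_symmDiff_add_two_mul_card_inter s t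
  have hstu := card_symmDiff_add_two_mul_card_inter (s ∆ t) u
  have hsu_tu := card_symmDiff_add_two_mul_card_inter (s ∩ u) (t ∩ u)
  rw [← inter_inter_distrib_right] at hsu_tu
  rw [symmDiff_inter] at hstu
  omega

theorem card_symmDiff_symmDiff_symmDiff (s t u v : Finset α) :
    #(s ∆ t ∆ u ∆ v) + 2 * (#(s ∩ t) + #(s ∩ u) + #(s ∩ v) + #(t ∩ u) + #(t ∩ v) + #(u ∩ v))
        + 8 * #(s ∩ t ∩ u ∩ v)
      = #s + #t + #u + #v
        + 4 * (#(s ∩ t ∩ u) + #(s ∩ t ∩ v) + #(s ∩ u ∩ v) + #(t ∩ u ∩ v)) := by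
  have hstu := card_symmDiff_symmDiff s t u
  have hstuv := card_symmDiff_add_two_mul_card_inter (s ∆ t ∆ u) v
  have hv := card_symmDiff_symmDiff (s ∩ v) (t ∩ v) (u ∩ v)
  simp only [← inter_inter_distrib_right] at hv
  simp only [symmDiff_inter] at hstuv
  omega

theorem symmDiff_subset_of_subset {s t u : Finset α} (hs : s ⊆ u) (ht : t ⊆ u) : s ∆ t ⊆ u :=
  symmDiff_le (le_sup_of_le_right hs) (le_sup_of_le_right ht)

theorem card_symmDiff_symmDiff_symmDiff_add_card_inter_le {s t u v w : Finset α} (hs : s ⊆ w)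
    (ht : t ⊆ w) (hu : u ⊆ w) (hv : v ⊆ w) : #(s ∆ t ∆ u ∆ v) + #(s ∩ t ∩ u ∩ v) ≤ #w := by
  have hdisj : Disjoint (s ∆ t ∆ u ∆ v) (s ∩ t ∩ u ∩ v) := by
    simp only [disjoint_left, mem_symmDiff, mem_inter]
    tauto
  rw [← card_union_of_disjoint hdisj]
  refine card_le_card (union_subset ?_ ?_)
  · exact symmDiff_subset_of_subset
      (symmDiff_subset_of_subset (symmDiff_subset_of_subset hs ht) hu) hv
  · exact inter_subset_left.trans (inter_subset_left.trans (inter_subset_left.trans hs))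

end Finset

theorem ZModModule.sum_symmDiff {α M : Type*} [DecidableEq α] [AddCommGroup M]
    [Module (ZMod 2) M] (s t : Finset α) (f : α → M) :
    ∑ x ∈ s ∆ t, f x = ∑ x ∈ s, f x + ∑ x ∈ t, f x := by
  rw [← sum_symmDiff_add_two_nsmul_sum_inter, char_nsmul_eq_zero, add_zero]

section Cap

variable {n : ℕ} {C : Set (Fin n → ZMod 2)}

theorem IsCap.add_add_ne (hC : IsCap C) {a b c d : Fin n → ZMod 2} (ha : a ∈ C) (hb : b ∈ C)
    (hc : c ∈ C) (hd : d ∈ C) (hab : a ≠ b) (hac : a ≠ c) (had : a ≠ d) (hbc : b ≠ c)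
    (hbd : b ≠ d) (hcd : c ≠ d) : a + b + c ≠ d := fun h =>
  hC a ha b hb c hc d hd hab hac had hbc hbd hcd <| by
    rw [h]; exact funext fun i => CharTwo.add_self_eq_zero (d i)

theorem IsCap.card_inter_inter_eq_two (hC : IsCap C) {B : Finset (Fin n → ZMod 2)}
    (hBC : ↑B ⊆ C) (hB : #B ≤ 8) ⦃s t u : Finset (Fin n → ZMod 2)⦄
    (hs : s ⊆ B) (ht : t ⊆ B) (hu : u ⊆ B)
    (hsC : (∑ v ∈ s, v) ∈ C \ B) (htC : (∑ v ∈ t, v) ∈ C \ B) (huC : (∑ v ∈ u, v) ∈ C \ B)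
    (hst : ∑ v ∈ s, v ≠ ∑ v ∈ t, v) (hsu : ∑ v ∈ s, v ≠ ∑ v ∈ u, v)
    (htu : ∑ v ∈ t, v ≠ ∑ v ∈ u, v)
    (hs5 : #s = 5) (ht5 : #t = 5) (hu5 : #u = 5)
    (hst3 : #(s ∩ t) = 3) (hsu3 : #(s ∩ u) = 3) (htu3 : #(t ∩ u) = 3) :
    #(s ∩ t ∩ u) = 2 := by
  have hcard := card_symmDiff_symmDiff s t u
  have hsub : s ∆ t ∆ u ⊆ B := symmDiff_subset_of_subset (symmDiff_subset_of_subset hs ht) hu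
  have hle := card_le_card hsub
  have hne_one : #(s ∆ t ∆ u) ≠ 1 := by
    intro h
    obtain ⟨b, hb⟩ := card_eq_one.1 h
    have hbB : b ∈ (B : Set (Fin n → ZMod 2)) := hsub (hb ▸ mem_singleton_self b)
    refine hC.add_add_ne hsC.1 htC.1 huC.1 (hBC hbB) hst hsu ?_ htu ?_ ?_ ?_
    · exact fun h => hsC.2 (h ▸ hbB)
    · exact fun h => htC.2 (h ▸ hbB)
    · exact fun h => huC.2 (h ▸ hbB)
    · rw [← ZModModule.sum_symmDiff, ← ZModModule.sum_symmDiff, hb, sum_singleton]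
  omega

end Cap

theorem forbidden_quadruples_general {n : ℕ} (C : Set (Fin n → ZMod 2))
    (hC : IsCap C) (B B₁ B₂ B₃ B₄ : Finset (Fin n → ZMod 2)) (hBC : ↑B ⊆ C)
    (hBcard : B.card = 8)
    (x₁ x₂ x₃ x₄ : Fin n → ZMod 2)
    (hx₁C : x₁ ∈ C) (hx₁B : x₁ ∉ B)
    (hx₂C : x₂ ∈ C) (hx₂B : x₂ ∉ B)
    (hx₃C : x₃ ∈ C) (hx₃B : x₃ ∉ B)
    (hx₄C : x₄ ∈ C) (hx₄B : x₄ ∉ B)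
    (h12 : x₁ ≠ x₂) (h13 : x₁ ≠ x₃) (h14 : x₁ ≠ x₄)
    (h23 : x₂ ≠ x₃) (h24 : x₂ ≠ x₄) (h34 : x₃ ≠ x₄)
    (hs₁ : B₁ ⊆ B) (hs₂ : B₂ ⊆ B) (hs₃ : B₃ ⊆ B) (hs₄ : B₄ ⊆ B)
    (he₁ : x₁ = ∑ v ∈ B₁, v) (he₂ : x₂ = ∑ v ∈ B₂, v)
    (he₃ : x₃ = ∑ v ∈ B₃, v) (he₄ : x₄ = ∑ v ∈ B₄, v)
    (hc₁ : B₁.card = 5) (hc₂ : B₂.card = 5) (hc₃ : B₃.card = 5) (hc₄ : B₄.card = 5) :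
    ¬((B₁ ∩ B₂).card = 3 ∧ (B₁ ∩ B₃).card = 3 ∧ (B₁ ∩ B₄).card = 3 ∧
      (B₂ ∩ B₃).card = 3 ∧ (B₂ ∩ B₄).card = 3 ∧ (B₃ ∩ B₄).card = 3) := by
  rintro ⟨i12, i13, i14, i23, i24, i34⟩
  subst he₁ he₂ he₃ he₄
  have triple := hC.card_inter_inter_eq_two hBC hBcard.le
  have t123 := triple hs₁ hs₂ hs₃ ⟨hx₁C, hx₁B⟩ ⟨hx₂C, hx₂B⟩ ⟨hx₃C, hx₃B⟩ h12 h13 h23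
    hc₁ hc₂ hc₃ i12 i13 i23
  have t124 := triple hs₁ hs₂ hs₄ ⟨hx₁C, hx₁B⟩ ⟨hx₂C, hx₂B⟩ ⟨hx₄C, hx₄B⟩ h12 h14 h24
    hc₁ hc₂ hc₄ i12 i14 i24
  have t134 := triple hs₁ hs₃ hs₄ ⟨hx₁C, hx₁B⟩ ⟨hx₃C, hx₃B⟩ ⟨hx₄C, hx₄B⟩ h13 h14 h34
    hc₁ hc₃ hc₄ i13 i14 i34
  have t234 := triple hs₂ hs₃ hs₄ ⟨hx₂C, hx₂B⟩ ⟨hx₃C, hx₃B⟩ ⟨hx₄C, hx₄B⟩ h23 h24 h34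
    hc₂ hc₃ hc₄ i23 i24 i34
  have hcard := card_symmDiff_symmDiff_symmDiff B₁ B₂ B₃ B₄
  have hle := card_symmDiff_symmDiff_symmDiff_add_card_inter_le hs₁ hs₂ hs₃ hs₄
  have hempty : B₁ ∆ B₂ ∆ B₃ ∆ B₄ = ∅ := card_eq_zero.1 (by omega)
  refine hC _ hx₁C _ hx₂C _ hx₃C _ hx₄C h12 h13 h14 h23 h24 h34 ?_
  rw [← ZModModule.sum_symmDiff, ← ZModModule.sum_symmDiff, ← ZModModule.sum_symmDiff, hempty,
    sum_empty]

theorem forbidden_quadruples {n : ℕ} (C : Set (Fin n → ZMod 2))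
    (hC : IsCap C) (B B₁ B₂ B₃ B₄ : Finset (Fin n → ZMod 2)) (hBC : ↑B ⊆ C)
    (hB : AffIndep B) (hBcard : B.card = 8)
    (x₁ x₂ x₃ x₄ : Fin n → ZMod 2)
    (hx₁C : x₁ ∈ C) (hx₁B : x₁ ∉ B)
    (hx₂C : x₂ ∈ C) (hx₂B : x₂ ∉ B)
    (hx₃C : x₃ ∈ C) (hx₃B : x₃ ∉ B)
    (hx₄C : x₄ ∈ C) (hx₄B : x₄ ∉ B)
    (h12 : x₁ ≠ x₂) (h13 : x₁ ≠ x₃) (h14 : x₁ ≠ x₄)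
    (h23 : x₂ ≠ x₃) (h24 : x₂ ≠ x₄) (h34 : x₃ ≠ x₄)
    (hs₁ : B₁ ⊆ B) (hs₂ : B₂ ⊆ B) (hs₃ : B₃ ⊆ B) (hs₄ : B₄ ⊆ B)
    (he₁ : x₁ = ∑ v ∈ B₁, v) (he₂ : x₂ = ∑ v ∈ B₂, v)
    (he₃ : x₃ = ∑ v ∈ B₃, v) (he₄ : x₄ = ∑ v ∈ B₄, v)
    (hc₁ : B₁.card = 5) (hc₂ : B₂.card = 5) (hc₃ : B₃.card = 5) (hc₄ : B₄.card = 5) :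
    ¬((B₁ ∩ B₂).card = 3 ∧ (B₁ ∩ B₃).card = 3 ∧ (B₁ ∩ B₄).card = 3 ∧
      (B₂ ∩ B₃).card = 3 ∧ (B₂ ∩ B₄).card = 3 ∧ (B₃ ∩ B₄).card = 3) :=
  forbidden_quadruples_general C hC B B₁ B₂ B₃ B₄ hBC hBcard x₁ x₂ x₃ x₄ hx₁C hx₁B hx₂C hx₂B hx₃C
    hx₃B hx₄C hx₄B h12 h13 h14 h23 h24 h34 hs₁ hs₂ hs₃ hs₄ he₁ he₂ he₃ he₄ hc₁ hc₂ hc₃ hc₄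
end
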